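/- arXiv:2511.09677 — 5 statements merged into one kernel-verified Lean document; each statement's English description precedes it below -/
import Mathlib

section
/- Suppose Z > 0 and the trajectory-balance condition Z·P_F(τ) = R(t(τ))·P_B(τ|t(τ)) holds for every trajectory τ ∈ Γ. Then for every terminal state x ∈ X one has Z·P_F(x) = R(x); consequently Z = ∑_{x'∈X} R(x') and the terminal marginal satisfies P_F(x) = R(x) / ∑_{x'∈X} R(x') for every x ∈ X. -/
/-- Trajectory balance implies reward-proportional terminal marginals:
if `Z > 0` and `Z·P_F(τ) = R(t τ)·P_B(τ | t τ)` for every trajectory, then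
`Z·P_F(x) = R(x)` for every terminal `x`, hence `Z = ∑ R` and
`P_F(x) = R(x) / ∑ R`. -/
theorem trajectory_balance_marginal
    {Γ X : Type*} [Fintype Γ] [Fintype X] [DecidableEq X]
    (t : Γ → X) (PF : Γ → ℝ) (PB : X → Γ → ℝ) (R : X → ℝ) (Z : ℝ)
    (hPF0 : ∀ τ, 0 ≤ PF τ)
    (hPF1 : ∑ τ, PF τ = 1)
    (hPB0 : ∀ x τ, 0 ≤ PB x τ)
    (hPBsupp : ∀ x τ, t τ ≠ x → PB x τ = 0)
    (hPB1 : ∀ x, ∑ τ ∈ Finset.univ.filter (fun τ => t τ = x), PB x τ = 1)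
    (hR : ∀ x, 0 < R x)
    (hZ : 0 < Z)
    (hTB : ∀ τ, Z * PF τ = R (t τ) * PB (t τ) τ) :
    (∀ x, Z * (∑ τ ∈ Finset.univ.filter (fun τ => t τ = x), PF τ) = R x) ∧
    Z = ∑ x', R x' ∧
    (∀ x, (∑ τ ∈ Finset.univ.filter (fun τ => t τ = x), PF τ) = R x / ∑ x', R x') := by
  have key : ∀ x, Z * (∑ τ ∈ Finset.univ.filter (fun τ => t τ = x), PF τ) = R x := by
    intro x
    rw [Finset.mul_sum]
    calc (∑ τ ∈ Finset.univ.filter (fun τ => t τ = x), Z * PF τ)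
        = ∑ τ ∈ Finset.univ.filter (fun τ => t τ = x), R x * PB x τ := by
          apply Finset.sum_congr rfl
          intro τ hτ
          simp only [Finset.mem_filter] at hτ
          rw [hTB τ, hτ.2]
      _ = R x * ∑ τ ∈ Finset.univ.filter (fun τ => t τ = x), PB x τ := by
          rw [Finset.mul_sum]
      _ = R x := by rw [hPB1 x, mul_one]
  have hZsum : Z = ∑ x', R x' := by
    have : ∑ x', R x' = ∑ x', Z * (∑ τ ∈ Finset.univ.filter (fun τ => t τ = x'), PF τ) := by
      exact Finset.sum_congr rfl (fun x _ => (key x).symm)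
    rw [this, ← Finset.mul_sum, Finset.sum_fiberwise_of_maps_to (fun τ _ => Finset.mem_univ (t τ)) PF, hPF1, mul_one]
  refine ⟨key, hZsum, fun x => ?_⟩
  rw [← hZsum, eq_div_iff (ne_of_gt hZ), mul_comm, key x]
end

section
/- Assume Z > 0, the expected trajectory-balance loss vanishes, i.e. ∑_{τ∈Γ} P_F(τ)·(log(Z·P_F(τ)) − log(R(t(τ))·P_B(τ|t(τ))))² = 0, and for every x with P_F(x) > 0 mutual absolute continuity holds on trajectories ending at x: for all τ with t(τ) = x, P_F(τ) = 0 if and only if P_B(τ|x) = 0. Then for every x ∈ X and every τ with t(τ) = x and P_B(τ|x) > 0: R̂(x;τ) = R(x) when P_F(x) > 0, and R̂(x;τ) = 0 when P_F(x) = 0. -/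
/-- At a trajectory-balance optimum (zero expected TB loss), under mutual
absolute continuity on trajectories ending at each covered terminal `x`, the
per-trajectory estimator `R̂(x;τ) = Z·P_F(τ)/P_B(τ|x)` equals `R(x)` whenever
`P_F(x) > 0` and equals `0` whenever `P_F(x) = 0`, for every `τ` ending at `x`
with `P_B(τ|x) > 0`. -/
theorem tb_estimator_deterministic
    {Γ X : Type*} [Fintype Γ] [Fintype X] [DecidableEq X]
    (t : Γ → X) (PF : Γ → ℝ) (PB : X → Γ → ℝ) (R : X → ℝ) (Z : ℝ)
    (hPF0 : ∀ τ, 0 ≤ PF τ)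
    (hPF1 : ∑ τ, PF τ = 1)
    (hPB0 : ∀ x τ, 0 ≤ PB x τ)
    (hPBsupp : ∀ x τ, t τ ≠ x → PB x τ = 0)
    (hPB1 : ∀ x, ∑ τ ∈ Finset.univ.filter (fun τ => t τ = x), PB x τ = 1)
    (hR : ∀ x, 0 < R x)
    (hZ : 0 < Z)
    (hLoss : ∑ τ, PF τ *
      (Real.log (Z * PF τ) - Real.log (R (t τ) * PB (t τ) τ)) ^ 2 = 0)
    (hAC : ∀ x, 0 < (∑ τ ∈ Finset.univ.filter (fun τ => t τ = x), PF τ) →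
      ∀ τ, t τ = x → (PF τ = 0 ↔ PB x τ = 0)) :
    ∀ x, ∀ τ, t τ = x → 0 < PB x τ →
      (0 < (∑ τ' ∈ Finset.univ.filter (fun τ' => t τ' = x), PF τ') →
        Z * PF τ / PB x τ = R x) ∧
      ((∑ τ' ∈ Finset.univ.filter (fun τ' => t τ' = x), PF τ') = 0 →
        Z * PF τ / PB x τ = 0) := by
  have hterm : ∀ τ, PF τ *
      (Real.log (Z * PF τ) - Real.log (R (t τ) * PB (t τ) τ)) ^ 2 = 0 := by
    intro τ
    have := (Finset.sum_eq_zero_iff_of_nonneg (fun τ _ =>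
      mul_nonneg (hPF0 τ) (sq_nonneg _))).mp hLoss τ (Finset.mem_univ τ)
    exact this
  intro x τ htx hPB
  constructor
  · intro hpos
    have hPFτ : 0 < PF τ := by
      rcases (hPF0 τ).lt_or_eq with h | h
      · exact h
      · exact absurd ((hAC x hpos τ htx).mp h.symm) hPB.ne'
    have hlog : Real.log (Z * PF τ) = Real.log (R (t τ) * PB (t τ) τ) := by
      have := hterm τ
      rcases mul_eq_zero.mp this with h | h
      · exact absurd h hPFτ.ne'
      · have := pow_eq_zero_iff (n := 2) (by norm_num) |>.mp h
        linarith
    have h1 : 0 < Z * PF τ := mul_pos hZ hPFτ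
    have h2 : 0 < R (t τ) * PB (t τ) τ := by
      rw [htx]; exact mul_pos (hR x) hPB
    have heq : Z * PF τ = R (t τ) * PB (t τ) τ := by
      have := congrArg Real.exp hlog
      rwa [Real.exp_log h1, Real.exp_log h2] at this
    rw [htx] at heq
    field_simp [hPB.ne'] at heq ⊢
    linarith
  · intro hzero
    have hPFτ : PF τ = 0 := by
      have := (Finset.sum_eq_zero_iff_of_nonneg (fun τ' _ => hPF0 τ')).mp hzero τ
        (by simp [htx])
      exact this
    simp [hPFτ]
end

section
/- (Zero variance at the trajectory-balance optimum.) Assume Z > 0, the expected trajectory-balance loss vanishes, i.e. ∑_{τ∈Γ} P_F(τ)·(log(Z·P_F(τ)) − log(R(t(τ))·P_B(τ|t(τ))))² = 0, and for every x with P_F(x) > 0 mutual absolute continuity holds on trajectories ending at x: for all τ with t(τ) = x, P_F(τ) = 0 if and only if P_B(τ|x) = 0. Then for every x ∈ X: (a) ∑_{τ : t(τ)=x} P_B(τ|x)·R̂(x;τ) equals R(x) if P_F(x) > 0 and equals 0 otherwise; and (b) the variance of R̂(x;·) under P_B(·|x) vanishes: ∑_{τ : t(τ)=x} P_B(τ|x)·R̂(x;τ)²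 − (∑_{τ : t(τ)=x} P_B(τ|x)·R̂(x;τ))² = 0. -/
/-- Zero variance at the trajectory-balance optimum: if the expected TB loss
vanishes and mutual absolute continuity holds on trajectories ending at each
covered terminal, then for every terminal `x` the backward-sampled mean of the
estimator `R̂(x;τ) = Z·P_F(τ)/P_B(τ|x)` equals `R(x)·𝟙[P_F(x) > 0]` and its
backward-sampled variance vanishes. -/
theorem tb_zero_variance_at_optimum
    {Γ X : Type*} [Fintype Γ] [Fintype X] [DecidableEq X]
    (t : Γ → X) (PF : Γ → ℝ) (PB : X → Γ → ℝ) (R : X → ℝ) (Z : ℝ)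
    (hPF0 : ∀ τ, 0 ≤ PF τ)
    (hPF1 : ∑ τ, PF τ = 1)
    (hPB0 : ∀ x τ, 0 ≤ PB x τ)
    (hPBsupp : ∀ x τ, t τ ≠ x → PB x τ = 0)
    (hPB1 : ∀ x, ∑ τ ∈ Finset.univ.filter (fun τ => t τ = x), PB x τ = 1)
    (hR : ∀ x, 0 < R x)
    (hZ : 0 < Z)
    (hLoss : ∑ τ, PF τ *
      (Real.log (Z * PF τ) - Real.log (R (t τ) * PB (t τ) τ)) ^ 2 = 0)
    (hAC : ∀ x, 0 < (∑ τ ∈ Finset.univ.filter (fun τ => t τ = x), PF τ) →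
      ∀ τ, t τ = x → (PF τ = 0 ↔ PB x τ = 0)) :
    ∀ x,
      ((∑ τ ∈ Finset.univ.filter (fun τ => t τ = x),
          PB x τ * (Z * PF τ / PB x τ)) =
        if 0 < (∑ τ ∈ Finset.univ.filter (fun τ => t τ = x), PF τ)
        then R x else 0) ∧
      ((∑ τ ∈ Finset.univ.filter (fun τ => t τ = x),
          PB x τ * (Z * PF τ / PB x τ) ^ 2) -
        (∑ τ ∈ Finset.univ.filter (fun τ => t τ = x),
          PB x τ * (Z * PF τ / PB x τ)) ^ 2 = 0) := by
  -- each loss term vanishes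
  have hterm : ∀ τ, PF τ *
      (Real.log (Z * PF τ) - Real.log (R (t τ) * PB (t τ) τ)) ^ 2 = 0 := by
    intro τ
    have := (Finset.sum_eq_zero_iff_of_nonneg (fun τ _ => mul_nonneg (hPF0 τ) (sq_nonneg _))).mp hLoss
    exact this τ (Finset.mem_univ τ)
  -- balance equation on support
  have hbal : ∀ τ, 0 < PF τ → Z * PF τ = R (t τ) * PB (t τ) τ := by
    intro τ hτ
    have hmarg : 0 < ∑ σ ∈ Finset.univ.filter (fun σ => t σ = t τ), PF σ := by
      apply Finset.sum_pos' (fun σ _ => hPF0 σ)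
      exact ⟨τ, Finset.mem_filter.mpr ⟨Finset.mem_univ τ, rfl⟩, hτ⟩
    have hPB : 0 < PB (t τ) τ := by
      rcases lt_or_eq_of_le (hPB0 (t τ) τ) with h | h
      · exact h
      · exact absurd (((hAC (t τ) hmarg τ rfl)).mpr h.symm) (ne_of_gt hτ)
    have hlog : Real.log (Z * PF τ) = Real.log (R (t τ) * PB (t τ) τ) := by
      have := hterm τ
      have h2 : (Real.log (Z * PF τ) - Real.log (R (t τ) * PB (t τ) τ)) ^ 2 = 0 := by
        rcases mul_eq_zero.mp this with h | h
        · exact absurd h (ne_of_gt hτ)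
        · exact h
      linarith [sq_eq_zero_iff.mp h2, sub_eq_zero.mp (sq_eq_zero_iff.mp h2)]
    have h1 : 0 < Z * PF τ := mul_pos hZ hτ
    have h2 : 0 < R (t τ) * PB (t τ) τ := mul_pos (hR (t τ)) hPB
    calc Z * PF τ = Real.exp (Real.log (Z * PF τ)) := (Real.exp_log h1).symm
      _ = Real.exp (Real.log (R (t τ) * PB (t τ) τ)) := by rw [hlog]
      _ = R (t τ) * PB (t τ) τ := Real.exp_log h2
  intro x
  by_cases hx : 0 < (∑ τ ∈ Finset.univ.filter (fun τ => t τ = x), PF τ)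
  · -- covered case: each term equals R x * PB x τ (mean) / R x ^2 * PB x τ (second moment)
    have key : ∀ τ ∈ Finset.univ.filter (fun τ => t τ = x),
        PB x τ * (Z * PF τ / PB x τ) = R x * PB x τ := by
      intro τ hτ
      have htx : t τ = x := (Finset.mem_filter.mp hτ).2
      rcases lt_or_eq_of_le (hPB0 x τ) with h | h
      · have hPFpos : 0 < PF τ := by
          rcases lt_or_eq_of_le (hPF0 τ) with h' | h'
          · exact h'
          · exact absurd ((hAC x hx τ htx).mp h'.symm) (ne_of_gt h)
        have := hbal τ hPFpos
        rw [htx] at this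
        field_simp
        linarith [this]
      · rw [← h]; ring
    have key2 : ∀ τ ∈ Finset.univ.filter (fun τ => t τ = x),
        PB x τ * (Z * PF τ / PB x τ) ^ 2 = R x ^ 2 * PB x τ := by
      intro τ hτ
      have htx : t τ = x := (Finset.mem_filter.mp hτ).2
      rcases lt_or_eq_of_le (hPB0 x τ) with h | h
      · have hPFpos : 0 < PF τ := by
          rcases lt_or_eq_of_le (hPF0 τ) with h' | h'
          · exact h'
          · exact absurd ((hAC x hx τ htx).mp h'.symm) (ne_of_gt h)
        have hb := hbal τ hPFpos
        rw [htx] at hb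
        have hq : Z * PF τ / PB x τ = R x := by
          field_simp
          linarith [hb]
        rw [hq]; ring
      · rw [← h]; ring
    have hmean : (∑ τ ∈ Finset.univ.filter (fun τ => t τ = x),
        PB x τ * (Z * PF τ / PB x τ)) = R x := by
      rw [Finset.sum_congr rfl key, ← Finset.mul_sum, hPB1 x, mul_one]
    constructor
    · rw [if_pos hx]; exact hmean
    · rw [Finset.sum_congr rfl key2, ← Finset.mul_sum, hPB1 x, mul_one, hmean]; ring
  · -- uncovered case: all PF τ = 0 on the fiber
    have hPFz : ∀ τ ∈ Finset.univ.filter (fun τ => t τ = x), PF τ = 0 := by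
      intro τ hτ
      by_contra h
      exact hx (Finset.sum_pos' (fun σ _ => hPF0 σ)
        ⟨τ, hτ, lt_of_le_of_ne (hPF0 τ) (Ne.symm h)⟩)
    have z1 : (∑ τ ∈ Finset.univ.filter (fun τ => t τ = x),
        PB x τ * (Z * PF τ / PB x τ)) = 0 := by
      apply Finset.sum_eq_zero
      intro τ hτ; rw [hPFz τ hτ]; simp
    have z2 : (∑ τ ∈ Finset.univ.filter (fun τ => t τ = x),
        PB x τ * (Z * PF τ / PB x τ) ^ 2) = 0 := by
      apply Finset.sum_eq_zero
      intro τ hτ; rw [hPFz τ hτ]; simp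
    exact ⟨by rw [if_neg hx]; exact z1, by rw [z1, z2]; ring⟩
end

section
/- (Boosted loss as a log mixture ratio.) Assume P_B(τ|t(τ)) > 0 for every τ ∈ Γ. Let R̂_old : X → ℝ with R̂_old(x) ≥ 0, set Z_old := ∑_{x∈X} R̂_old(x) and assume Z_old > 0; let Z_θ > 0 and β := Z_θ/(Z_old + Z_θ). Let p_F : Γ → ℝ be a forward distribution with p_F(τ) > 0 for all τ. Define p_old(τ) := R̂_old(t(τ))·P_B(τ|t(τ))/Z_old, p_tgt(τ) := R(t(τ))·P_B(τ|t(τ))/(Z_old + Z_θ), p_M(τ) := (1−β)·p_old(τ) + β·p_F(τ), R̂_θ(τ) := Z_θ·p_F(τ)/P_B(τ|t(τ)), and L_boost(τ) := (log(R̂_θ(τ) + R̂_old(t(τ))) − log R(t(τ)))². Then for every τ ∈ Γ, L_boost(τ) = (log(p_M(τ)/p_tgt(τ)))². -/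
/-- Boosted loss as a log mixture ratio: with `β = Z_θ/(Z_old + Z_θ)`,
`p_old(τ) = R̂_old(t τ)·P_B(τ|t τ)/Z_old`,
`p_tgt(τ) = R(t τ)·P_B(τ|t τ)/(Z_old + Z_θ)`,
`p_M = (1−β)·p_old + β·p_F`, and
`R̂_θ(τ) = Z_θ·p_F(τ)/P_B(τ|t τ)`, the boosted loss
`(log(R̂_θ(τ) + R̂_old(t τ)) − log R(t τ))²` equals `(log(p_M(τ)/p_tgt(τ)))²`. -/
theorem boosted_loss_log_mixture_ratio
    {Γ X : Type*} [Fintype Γ] [Fintype X] [DecidableEq X]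
    (t : Γ → X) (PB : X → Γ → ℝ) (R : X → ℝ)
    (Rold : X → ℝ) (Zθ : ℝ) (pF : Γ → ℝ)
    (hPB0 : ∀ x τ, 0 ≤ PB x τ)
    (hPBsupp : ∀ x τ, t τ ≠ x → PB x τ = 0)
    (hPB1 : ∀ x, ∑ τ ∈ Finset.univ.filter (fun τ => t τ = x), PB x τ = 1)
    (hPBpos : ∀ τ, 0 < PB (t τ) τ)
    (hR : ∀ x, 0 < R x)
    (hRold : ∀ x, 0 ≤ Rold x)
    (hZold : 0 < ∑ x, Rold x)
    (hZθ : 0 < Zθ)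
    (hpF0 : ∀ τ, 0 < pF τ)
    (hpF1 : ∑ τ, pF τ = 1) :
    ∀ τ : Γ,
      (Real.log (Zθ * pF τ / PB (t τ) τ + Rold (t τ)) -
          Real.log (R (t τ))) ^ 2 =
      (Real.log
        (((1 - Zθ / ((∑ x, Rold x) + Zθ)) *
            (Rold (t τ) * PB (t τ) τ / (∑ x, Rold x)) +
          (Zθ / ((∑ x, Rold x) + Zθ)) * pF τ) /
          (R (t τ) * PB (t τ) τ / ((∑ x, Rold x) + Zθ)))) ^ 2 := by
  intro τ
  set Z := (∑ x, Rold x) with hZ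
  have hPB := hPBpos τ
  have hRt := hR (t τ)
  have hnum : 0 < Zθ * pF τ / PB (t τ) τ + Rold (t τ) := by
    have := hpF0 τ
    have h1 : 0 < Zθ * pF τ / PB (t τ) τ := by positivity
    linarith [hRold (t τ)]
  have key : ((1 - Zθ / (Z + Zθ)) * (Rold (t τ) * PB (t τ) τ / Z) +
      (Zθ / (Z + Zθ)) * pF τ) / (R (t τ) * PB (t τ) τ / (Z + Zθ)) =
      (Zθ * pF τ / PB (t τ) τ + Rold (t τ)) / R (t τ) := by
    have hZs : Z + Zθ ≠ 0 := by positivity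
    field_simp
    ring
  rw [key, Real.log_div (ne_of_gt hnum) (ne_of_gt hRt)]
end

section
/- (Expected gradient of the squared log-ratio loss equals twice the KL gradient.) Let E be a finite-dimensional real normed vector space, Γ a finite type, q : Γ → ℝ with q(τ) > 0 for all τ, and p : E → Γ → ℝ a parametrized family such that for every θ ∈ E and τ ∈ Γ, p(θ,τ) > 0, ∑_{τ∈Γ} p(θ,τ) = 1, and θ ↦ p(θ,τ) is differentiable. Then for every θ ∈ E, ∑_{τ∈Γ} p(θ,τ)·∇_θ[(log(p(θ,τ)/q(τ)))²] = 2·∇_θ[∑_{τ∈Γ} p(θ,τ)·log(p(θ,τ)/q(τ))], where ∇_θ denotes the Fréchet derivative with respect to θ. -/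
/-!
Differentiating `log (p/q)` gives the score `∇p / p`, so the weight `p` in front of
`∇ (log (p/q))² = 2 log (p/q) ∇p / p` cancels and the left side is `2 ∑ log (p/q) ∇p`.
The gradient of the divergence is `∑ (1 + log (p/q)) ∇p`, and the extra `∑ ∇p` vanishes
because `∑ p = 1` for every parameter.
-/

open Finset Real

theorem HasFDerivAt.sum_eq_zero_of_sum_eq_const {𝕜 E F ι : Type*} [NontriviallyNormedField 𝕜]
    [NormedAddCommGroup E] [NormedSpace 𝕜 E] [NormedAddCommGroup F] [NormedSpace 𝕜 F]
    {s : Finset ι} {f : ι → E → F} {f' : ι → E →L[𝕜] F} {x : E} {c : F}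
    (hf : ∀ i ∈ s, HasFDerivAt (f i) (f' i) x) (hc : ∀ y, ∑ i ∈ s, f i y = c) :
    ∑ i ∈ s, f' i = 0 := by
  have hsum := HasFDerivAt.fun_sum hf
  simp only [hc] at hsum
  exact hsum.unique (hasFDerivAt_const c x)

section LogRatio

variable {E : Type*} [NormedAddCommGroup E] [NormedSpace ℝ E]
  {f : E → ℝ} {f' : StrongDual ℝ E} {x : E} {c : ℝ}

theorem HasFDerivAt.log_div_const (hf : HasFDerivAt f f' x) (hx : f x ≠ 0) (hc : c ≠ 0) :
    HasFDerivAt (fun y => Real.log (f y / c)) ((f x)⁻¹ • f') x := by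
  have h := (hf.const_mul c⁻¹).log (mul_ne_zero (inv_ne_zero hc) hx)
  simp only [div_eq_inv_mul]
  refine h.congr_fderiv ?_
  rw [smul_smul]
  field_simp

theorem HasFDerivAt.log_div_const_sq (hf : HasFDerivAt f f' x) (hx : f x ≠ 0) (hc : c ≠ 0) :
    HasFDerivAt (fun y => Real.log (f y / c) ^ 2)
      ((2 * Real.log (f x / c) / f x) • f') x := by
  refine ((hf.log_div_const hx hc).pow 2).congr_fderiv ?_
  rw [smul_smul]
  norm_num [div_eq_mul_inv]

theorem HasFDerivAt.mul_log_div_const (hf : HasFDerivAt f f' x) (hx : f x ≠ 0) (hc : c ≠ 0) :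
    HasFDerivAt (fun y => f y * Real.log (f y / c)) ((1 + Real.log (f x / c)) • f') x := by
  refine (hf.fun_mul (hf.log_div_const hx hc)).congr_fderiv ?_
  rw [smul_smul, mul_inv_cancel₀ hx, add_smul, one_smul]

end LogRatio

theorem expected_grad_sq_log_ratio_eq_two_kl_grad_general
    {E : Type*} [NormedAddCommGroup E] [NormedSpace ℝ E]
    {Γ : Type*} [Fintype Γ]
    (q : Γ → ℝ) (hq : ∀ τ, 0 < q τ)
    (p : E → Γ → ℝ)
    (hpos : ∀ θ τ, 0 < p θ τ)
    (hsum : ∀ θ, ∑ τ, p θ τ = 1)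
    (hdiff : ∀ τ, Differentiable ℝ (fun θ => p θ τ)) :
    ∀ θ : E,
      ∑ τ, p θ τ • fderiv ℝ (fun θ' => (Real.log (p θ' τ / q τ)) ^ 2) θ =
        (2 : ℝ) •
          fderiv ℝ (fun θ' => ∑ τ, p θ' τ * Real.log (p θ' τ / q τ)) θ := by
  intro θ
  set D : Γ → StrongDual ℝ E := fun τ => fderiv ℝ (fun θ' => p θ' τ) θ
  have hD : ∀ τ, HasFDerivAt (fun θ' => p θ' τ) (D τ) θ := fun τ => (hdiff τ θ).hasFDerivAt
  have hD_sum : ∑ τ, D τ = 0 :=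
    HasFDerivAt.sum_eq_zero_of_sum_eq_const (fun τ _ => hD τ) hsum
  have hKL := HasFDerivAt.fun_sum fun τ (_ : τ ∈ univ) =>
    HasFDerivAt.mul_log_div_const (hD τ) (hpos θ τ).ne' (hq τ).ne'
  rw [hKL.fderiv]
  calc ∑ τ, p θ τ • fderiv ℝ (fun θ' => log (p θ' τ / q τ) ^ 2) θ
      = ∑ τ, (2 : ℝ) • (log (p θ τ / q τ) • D τ) := by
        refine sum_congr rfl fun τ _ => ?_
        have hsq := HasFDerivAt.log_div_const_sq (hD τ) (hpos θ τ).ne' (hq τ).ne'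
        rw [hsq.fderiv, smul_smul, smul_smul]
        field_simp [(hpos θ τ).ne']
    _ = (2 : ℝ) • ∑ τ, (1 + log (p θ τ / q τ)) • D τ := by
        simp only [add_smul, one_smul, sum_add_distrib, hD_sum, zero_add, smul_sum]

/-- The expected gradient of the squared log-ratio loss equals twice the
gradient of the (generalized) KL divergence:
`∑_τ p(θ,τ)·∇_θ (log(p(θ,τ)/q(τ)))² = 2·∇_θ ∑_τ p(θ,τ)·log(p(θ,τ)/q(τ))`. -/
theorem expected_grad_sq_log_ratio_eq_two_kl_grad
    {E : Type*} [NormedAddCommGroup E] [NormedSpace ℝ E] [FiniteDimensional ℝ E]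
    {Γ : Type*} [Fintype Γ]
    (q : Γ → ℝ) (hq : ∀ τ, 0 < q τ)
    (p : E → Γ → ℝ)
    (hpos : ∀ θ τ, 0 < p θ τ)
    (hsum : ∀ θ, ∑ τ, p θ τ = 1)
    (hdiff : ∀ τ, Differentiable ℝ (fun θ => p θ τ)) :
    ∀ θ : E,
      ∑ τ, p θ τ • fderiv ℝ (fun θ' => (Real.log (p θ' τ / q τ)) ^ 2) θ =
        (2 : ℝ) •
          fderiv ℝ (fun θ' => ∑ τ, p θ' τ * Real.log (p θ' τ / q τ)) θ :=
  expected_grad_sq_log_ratio_eq_two_kl_grad_general q hq p hpos hsum hdiff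
end
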